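/- For all integers a ≥ 0, b ≥ 1, every integer n ≥ 0 and every real x: T^{(a,b−1)}_{n,λ}(x) = (1/2)·(T^{(a,b)}_{n,λ}(x+1) + T^{(a,b)}_{n,λ}(x)). -/

import Mathlib

/-!
Since `e_λ^{x+1}(t) = e_λ^x(t) · e_λ(t)` (the binomial theorem for degenerate falling factorials),
both `2 · T^{(a,b-1)}(x)` and `T^{(a,b)}(x+1) + T^{(a,b)}(x)` have generating functions which become
`2^b t^a e_λ^x(t) (e_λ(t) + 1)` after multiplication by `(e_λ(t) - 1)^a (e_λ(t) + 1)^b`. That factor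
is a nonzero element of the integral domain `ℝ⟦t⟧`, so the generating functions coincide.
-/

open Finset PowerSeries

noncomputable def dff (lam x : ℝ) (n : ℕ) : ℝ := ∏ i ∈ Finset.range n, (x - i * lam)

noncomputable def degExp (lam x : ℝ) : PowerSeries ℝ :=
  PowerSeries.mk fun k => dff lam x k / k.factorial

theorem dff_succ (lam x : ℝ) (n : ℕ) : dff lam x (n + 1) = dff lam x n * (x - n * lam) :=
  prod_range_succ _ n

theorem dff_add (lam x y : ℝ) (n : ℕ) :
    dff lam (x + y) n =
      ∑ ij ∈ antidiagonal n, (n.choose ij.1 : ℝ) * (dff lam x ij.1 * dff lam y ij.2) := by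
  induction n with
  | zero => simp [dff]
  | succ n ih =>
    rw [sum_antidiagonal_choose_succ_mul (fun i j => dff lam x i * dff lam y j), dff_succ, ih,
      sum_mul, ← sum_add_distrib]
    refine sum_congr rfl fun ij hij => ?_
    rw [HasAntidiagonal.mem_antidiagonal] at hij
    have hn : (n : ℝ) = ij.1 + ij.2 := by exact_mod_cast hij.symm
    rw [Nat.choose_symm_of_eq_add hij.symm, dff_succ, dff_succ, hn]
    ring

theorem degExp_mul (lam x y : ℝ) : degExp lam x * degExp lam y = degExp lam (x + y) := by
  ext n
  simp only [degExp, coeff_mul, coeff_mk, dff_add, sum_div]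
  refine sum_congr rfl fun ij hij => ?_
  obtain ⟨i, j⟩ := ij
  rw [← HasAntidiagonal.mem_antidiagonal.mp hij]
  have hfac : ((i + j).choose i : ℝ) * i.factorial * j.factorial = (i + j).factorial := by
    rw [Nat.choose_symm_add]; exact_mod_cast Nat.add_choose_mul_factorial_mul_factorial i j
  have hchoose : ((i + j).choose i : ℝ) ≠ 0 :=
    Nat.cast_ne_zero.mpr (Nat.choose_pos (Nat.le_add_right i j)).ne'
  rw [← hfac]
  field_simp

theorem constantCoeff_degExp (lam x : ℝ) : constantCoeff (degExp lam x) = 1 := by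
  simp [degExp, dff]

theorem coeff_one_degExp (lam x : ℝ) : coeff 1 (degExp lam x) = x := by
  simp [degExp, dff]

theorem stmt16_general (lam : ℝ)
    (T : ℕ → ℕ → ℝ → ℕ → ℝ)
    (hT : ∀ a b x, (PowerSeries.mk fun n => T a b x n / n.factorial)
          * (degExp lam 1 - 1) ^ a * (degExp lam 1 + 1) ^ b
        = (2 : PowerSeries ℝ) ^ b * (PowerSeries.X : PowerSeries ℝ) ^ a * degExp lam x)
    (a b : ℕ) (hb : 1 ≤ b) (n : ℕ) (x : ℝ) :
    T a (b - 1) x n = (1 / 2) * (T a b (x + 1) n + T a b x n) := by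
  obtain ⟨c, rfl⟩ : ∃ c, b = c + 1 := ⟨b - 1, by omega⟩
  set E := degExp lam 1
  set egf : ℕ → ℝ → PowerSeries ℝ := fun b x => mk fun n => T a b x n / n.factorial with hegf
  have hE_sub : E - 1 ≠ 0 := fun h => by simpa [E, coeff_one_degExp] using congrArg (coeff 1) h
  have hE_add : E + 1 ≠ 0 := fun h => by
    simpa [E, constantCoeff_degExp] using congrArg constantCoeff h
  have hsum : egf c x + egf c x = egf (c + 1) (x + 1) + egf (c + 1) x := by
    refine mul_right_cancel₀ (mul_ne_zero (pow_ne_zero a hE_sub) (pow_ne_zero (c + 1) hE_add)) ?_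
    have hshift : degExp lam (x + 1) = degExp lam x * E := (degExp_mul lam x 1).symm
    linear_combination (2 * (E + 1)) * hT a c x - hT a (c + 1) (x + 1) - hT a (c + 1) x
      - (2 ^ (c + 1) * X ^ a) * hshift
  have hcoeff := congrArg (coeff n) hsum
  simp only [hegf, coeff_mk, map_add] at hcoeff
  rw [Nat.add_sub_cancel]
  field_simp at hcoeff
  linarith

theorem stmt16 (lam : ℝ) (hlam : lam ≠ 0)
    (T : ℕ → ℕ → ℝ → ℕ → ℝ)
    (hT : ∀ a b x, (PowerSeries.mk fun n => T a b x n / n.factorial)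
          * (degExp lam 1 - 1) ^ a * (degExp lam 1 + 1) ^ b
        = (2 : PowerSeries ℝ) ^ b * (PowerSeries.X : PowerSeries ℝ) ^ a * degExp lam x)
    (a b : ℕ) (hb : 1 ≤ b) (n : ℕ) (x : ℝ) :
    T a (b - 1) x n = (1 / 2) * (T a b (x + 1) n + T a b x n) :=
  stmt16_general lam T hT a b hb n x
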